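/- Suppose C, P are twice differentiable in x and once in τ on an open set Ω, satisfying there the inequalities ∂_τ C - 𝓛C ≤ A and ∂_τ P - 𝓛P ≤ B pointwise with A, B ≥ 0, and suppose |C - P| ≤ M on Ω. Let φ be smooth with 0 ≤ φ' ≤ 1, φ'' ≥ 0, φ ≥ 0, and φ(t) ≤ (t+ε)⁺. Then J := φ(C - P) + P satisfies ∂_τ J - 𝓛J ≤ A + B + 2r(M + ε) on Ω, where 𝓛u = (σ²/2)∂_{xx}u + (r - q - σ²/2)∂_x u - r u with r, σ > 0, q ≥ 0. -/
import Mathlib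


theorem J_supersolution_bound (Ω : Set (ℝ × ℝ)) (hΩ : IsOpen Ω)
    (r q σ A B M ε : ℝ) (hr : 0 < r) (hσ : 0 < σ) (hq : 0 ≤ q)
    (hA : 0 ≤ A) (hB : 0 ≤ B) (hM : 0 ≤ M) (hε : 0 ≤ ε)
    (C P Cτ Cx Cxx Pτ Px Pxx : ℝ × ℝ → ℝ)
    (hCτ : ∀ p ∈ Ω, HasDerivAt (fun t => C (t, p.2)) (Cτ p) p.1)
    (hCx : ∀ p ∈ Ω, HasDerivAt (fun x => C (p.1, x)) (Cx p) p.2)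
    (hCxx : ∀ p ∈ Ω, HasDerivAt (fun x => Cx (p.1, x)) (Cxx p) p.2)
    (hPτ : ∀ p ∈ Ω, HasDerivAt (fun t => P (t, p.2)) (Pτ p) p.1)
    (hPx : ∀ p ∈ Ω, HasDerivAt (fun x => P (p.1, x)) (Px p) p.2)
    (hPxx : ∀ p ∈ Ω, HasDerivAt (fun x => Px (p.1, x)) (Pxx p) p.2)
    (hCineq : ∀ p ∈ Ω,
      Cτ p - (σ ^ 2 / 2 * Cxx p + (r - q - σ ^ 2 / 2) * Cx p - r * C p) ≤ A)
    (hPineq : ∀ p ∈ Ω,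
      Pτ p - (σ ^ 2 / 2 * Pxx p + (r - q - σ ^ 2 / 2) * Px p - r * P p) ≤ B)
    (hCP : ∀ p ∈ Ω, |C p - P p| ≤ M)
    (φ : ℝ → ℝ) (hφ : ContDiff ℝ (⊤ : ℕ∞) φ)
    (hφ0 : ∀ t : ℝ, 0 ≤ φ t)
    (hφ' : ∀ t : ℝ, 0 ≤ deriv φ t ∧ deriv φ t ≤ 1)
    (hφ'' : ∀ t : ℝ, 0 ≤ deriv (deriv φ) t)
    (hφup : ∀ t : ℝ, φ t ≤ max (t + ε) 0) :
    ∀ p ∈ Ω,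
      (deriv φ (C p - P p) * (Cτ p - Pτ p) + Pτ p) -
        (σ ^ 2 / 2 *
            (deriv (deriv φ) (C p - P p) * (Cx p - Px p) ^ 2 +
              deriv φ (C p - P p) * (Cxx p - Pxx p) + Pxx p) +
          (r - q - σ ^ 2 / 2) * (deriv φ (C p - P p) * (Cx p - Px p) + Px p) -
          r * (φ (C p - P p) + P p)) ≤ A + B + 2 * r * (M + ε) := by
  intro p hp
  have hC := hCineq p hp
  have hP := hPineq p hp
  obtain ⟨hd1, hd2⟩ := abs_le.1 (hCP p hp)
  obtain ⟨ha0, ha1⟩ := hφ' (C p - P p)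
  have hb := hφ'' (C p - P p)
  have hφle : φ (C p - P p) ≤ M + ε :=
    (hφup (C p - P p)).trans (max_le (by linarith) (by linarith))
  have hsq : 0 ≤ deriv (deriv φ) (C p - P p) * (Cx p - Px p) ^ 2 :=
    mul_nonneg hb (sq_nonneg _)
  have hσ2 : (0:ℝ) < σ ^ 2 / 2 := by positivity
  have h1 := mul_le_mul_of_nonneg_left hC ha0
  have h2 := mul_le_mul_of_nonneg_left hP
    (by linarith : (0:ℝ) ≤ 1 - deriv φ (C p - P p))
  have h3 : -(deriv φ (C p - P p)) * (C p - P p) ≤ M := by nlinarith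
  have h4 := mul_nonneg hσ2.le hsq
  nlinarith [mul_le_mul_of_nonneg_left hφle hr.le,
    mul_le_mul_of_nonneg_left h3 hr.le, hr.le]
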